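/- Fix n ∈ ℕ, a positive definite quadratic form g on ℝ^d with |j|_g² := g(j,j), and r ∈ ℕ. Let μ be the product over j ∈ ℤ^d of the uniform probability measures on [−1/2, 1/2], a probability measure on A := [−1/2,1/2]^{ℤ^d}, and for a ∈ A define ω_j(a) := |j|_g² + a_j (1+|j|)^{−n}. Then there exist τ > 0 and a set 𝒱^{res} ⊂ A with μ(𝒱^{res}) = 0 such that for every a ∈ A ∖ 𝒱^{res} there exists γ > 0 with the following property: for every N ≥ 1 and every k : ℤ^d_N → ℤ with 0 < Σ_{j∈ℤ^d_N} |k_j| ≤ r, one has |Σ_{j∈ℤ^d_N} k_j ω_j(a)| ≥ γ / N^{τ}, where ℤ^d_N := {j ∈ ℤ^d : |j| ≤ N}. -/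

import Mathlib

open scoped BigOperators
open MeasureTheory

namespace AG

abbrev Zd (d : ℕ) := Fin d → ℤ

noncomputable def enorm {d : ℕ} (j : Zd d) : ℝ := Real.sqrt (∑ i, ((j i : ℝ))^2)

/-- `|j|_g² = g(j,j)` for a quadratic form with coefficients `g`. -/
noncomputable def qform (d : ℕ) (g : Fin d → Fin d → ℝ) (j : Zd d) : ℝ :=
  ∑ i, ∑ k, g i k * (j i : ℝ) * (j k : ℝ)

/-- `μ` is the product over `j ∈ ℤ^d` of the uniform probability measures on
`[−1/2,1/2]`: on every finite cylinder it is given by the product of the uniform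
measures of the factors. -/
def IsCylinderUniform (d : ℕ) (μ : Measure (Zd d → ℝ)) : Prop :=
  ∀ (S : Finset (Zd d)) (t : Zd d → Set ℝ), (∀ j, MeasurableSet (t j)) →
    μ {a | ∀ j ∈ S, a j ∈ t j} =
      ∏ j ∈ S, volume (t j ∩ Set.Icc (-(1 : ℝ) / 2) (1 / 2))

/-- The NLS frequencies `ω_j(a) = |j|_g² + a_j (1+|j|)^{−n}`. -/
noncomputable def nlsFreq (d n : ℕ) (g : Fin d → Fin d → ℝ) (a : Zd d → ℝ)
    (j : Zd d) : ℝ :=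
  qform d g j + a j * (1 + enorm j) ^ (-(n : ℝ))

/-!
The cylinder condition pins `μ` down as the infinite product of uniform laws on `[-1/2, 1/2]`,
so the coordinates `a_j` are independent. For a fixed `k ≠ 0` supported in the ball of radius
`N`, pick `j₀` with `k j₀ ≠ 0`: the small divisor is `b a_{j₀} + Y` with `Y` independent of
`a_{j₀}` and `|b| ≥ (1 + N)^{-n}`, so conditioning on `Y` it lies in `(-ε, ε)` with probability
at most `2ε(1 + N)^n`. Every admissible `k` is a sum of `r` vectors from `{0, ±e_j : |j_i| ≤ N}`,
so there are `O(N^{(d+1)r})` of them; with `ε = γ N^{-τ}` and `τ = (d+1)r + n + 2` the resonant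
set at scale `N` has measure `O(γ N^{-2})`. Summing over `N`, the set of `a` that fail with
constant `γ` has measure `O(γ)`, and the intersection over `γ > 0` is null.
-/

open ProbabilityTheory

noncomputable abbrev unitUniform : Measure ℝ := volume.restrict (Set.Icc (-(1 : ℝ) / 2) (1 / 2))

instance : IsProbabilityMeasure unitUniform :=
  ⟨by rw [Measure.restrict_apply_univ, Real.volume_Icc]; norm_num⟩

theorem eq_infinitePi_of_isCylinderUniform {d : ℕ} {μ : Measure (Zd d → ℝ)}
    (hμ : IsCylinderUniform d μ) : μ = Measure.infinitePi fun _ ↦ unitUniform := by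
  refine Measure.eq_infinitePi _ fun S t ht ↦ ?_
  simp only [Measure.restrict_apply (ht _)]
  exact hμ S t ht

theorem volume_abs_mul_add_lt {b : ℝ} (hb : b ≠ 0) (y ε : ℝ) :
    volume {x : ℝ | |b * x + y| < ε} = ENNReal.ofReal (2 * ε / |b|) := by
  have : {x : ℝ | |b * x + y| < ε} = (b * ·) ⁻¹' ((· + y) ⁻¹' Metric.ball 0 ε) := by
    ext x; simp [Real.dist_eq]
  rw [this, Real.volume_preimage_mul_left hb, measure_preimage_add_right, Real.volume_ball,
    ← ENNReal.ofReal_mul (abs_nonneg _), abs_inv, inv_mul_eq_div]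

theorem measure_abs_mul_add_lt_le {Ω : Type*} [MeasurableSpace Ω] {P : Measure Ω}
    [IsProbabilityMeasure P] {X Y : Ω → ℝ} (hXY : IndepFun X Y P) (hX : Measurable X)
    (hY : Measurable Y) (hlaw : P.map X ≤ volume) {b : ℝ} (hb : b ≠ 0) (ε : ℝ) :
    P {ω | |b * X ω + Y ω| < ε} ≤ ENNReal.ofReal (2 * ε / |b|) := by
  have hS : MeasurableSet {p : ℝ × ℝ | |b * p.1 + p.2| < ε} :=
    measurableSet_lt (by fun_prop) measurable_const
  calc P {ω | |b * X ω + Y ω| < ε}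
      = P.map (fun ω ↦ (X ω, Y ω)) {p | |b * p.1 + p.2| < ε} := by
        rw [Measure.map_apply (by fun_prop) hS]; rfl
    _ = ∫⁻ y, P.map X {x | |b * x + y| < ε} ∂P.map Y := by
        rw [hXY.map_prod_eq_prod_map_map hX.aemeasurable hY.aemeasurable,
          Measure.prod_apply_symm hS]; rfl
    _ ≤ ∫⁻ _, ENNReal.ofReal (2 * ε / |b|) ∂P.map Y := by
        gcongr with y
        exact (hlaw _).trans (volume_abs_mul_add_lt hb y ε).le
    _ = ENNReal.ofReal (2 * ε / |b|) := by
        have := Measure.isProbabilityMeasure_map (μ := P) hY.aemeasurable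
        rw [lintegral_const, measure_univ, mul_one]

theorem infinitePi_abs_add_sum_mul_lt_le {ι : Type*} {ν : ι → Measure ℝ}
    [∀ i, IsProbabilityMeasure (ν i)] {i₀ : ι} (hν : ν i₀ ≤ volume) {B : Finset ι}
    (hi₀ : i₀ ∈ B) {b : ι → ℝ} (hb : b i₀ ≠ 0) (c ε : ℝ) :
    Measure.infinitePi ν {a | |c + ∑ i ∈ B, b i * a i| < ε} ≤
      ENNReal.ofReal (2 * ε / |b i₀|) := by
  classical
  set T := B.erase i₀
  have hcoord : iIndepFun (fun i (a : ι → ℝ) ↦ a i) (Measure.infinitePi ν) :=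
    iIndepFun_infinitePi (X := fun _ x ↦ x) fun _ ↦ measurable_id
  have hXY : IndepFun (fun a : ι → ℝ ↦ a i₀) (fun a ↦ c + ∑ i ∈ T, b i * a i)
      (Measure.infinitePi ν) := by
    have hφ : Measurable fun y : ({i₀} : Finset ι) → ℝ ↦ y ⟨i₀, Finset.mem_singleton_self _⟩ :=
      measurable_pi_apply _
    have hψ : Measurable fun z : T → ℝ ↦ c + ∑ i : T, b i * z i := by fun_prop
    have := (hcoord.indepFun_finset {i₀} T (by simp [T]) measurable_pi_apply).comp hφ hψ
    convert this using 1
    · rfl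
    ext a
    exact congrArg (c + ·) (Finset.sum_coe_sort T fun i ↦ b i * a i).symm
  have hsplit : ∀ a : ι → ℝ,
      c + ∑ i ∈ B, b i * a i = b i₀ * a i₀ + (c + ∑ i ∈ T, b i * a i) := fun a ↦ by
    rw [← Finset.add_sum_erase B _ hi₀]; ring
  simp only [hsplit]
  refine measure_abs_mul_add_lt_le hXY (measurable_pi_apply i₀) (by fun_prop) ?_ hb ε
  rwa [Measure.infinitePi_map_eval]

section SignedUnits

open Finset Pointwise
open scoped Classical

noncomputable def signedUnits {ι : Type*} (B : Finset ι) : Finset (ι → ℤ) :=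
  insert 0 ((B ×ˢ {1, -1}).image fun p ↦ Pi.single p.1 p.2)

theorem card_signedUnits_le {ι : Type*} (B : Finset ι) :
    #(signedUnits B) ≤ 2 * #B + 1 := by
  refine (card_insert_le _ _).trans (Nat.add_le_add_right (card_image_le.trans ?_) 1)
  rw [card_product, mul_comm]
  exact Nat.mul_le_mul_right _ card_le_two

theorem zero_mem_signedUnits {ι : Type*} (B : Finset ι) : 0 ∈ signedUnits B :=
  mem_insert_self _ _

theorem natAbs_sub_sign_add_one {z : ℤ} (hz : z ≠ 0) : (z - z.sign).natAbs + 1 = z.natAbs := by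
  rcases hz.lt_or_gt with h | h
  · rw [Int.sign_eq_neg_one_of_neg h]; omega
  · rw [Int.sign_eq_one_of_pos h]; omega

theorem mem_nsmul_signedUnits {ι : Type*} {B : Finset ι} (r : ℕ) {k : ι → ℤ}
    (hk : ∀ j, k j ≠ 0 → j ∈ B) (hr : ∑ j ∈ B, (k j).natAbs ≤ r) :
    k ∈ r • signedUnits B := by
  induction r generalizing k with
  | zero =>
    have : k = 0 := funext fun j ↦ by
      show k j = 0
      by_contra hj
      have := (sum_eq_zero_iff.mp (Nat.le_zero.mp hr)) j (hk j hj)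
      omega
    simp [this]
  | succ r ih =>
    rw [succ_nsmul]
    by_cases hle : ∑ j ∈ B, (k j).natAbs ≤ r
    · simpa using add_mem_add (ih hk hle) (zero_mem_signedUnits B)
    obtain ⟨j₀, hj₀B, hj₀⟩ : ∃ j ∈ B, k j ≠ 0 := by
      by_contra! h
      rw [sum_eq_zero fun j hj ↦ by rw [h j hj, Int.natAbs_zero]] at hle
      omega
    set e : ι → ℤ := Pi.single j₀ (k j₀).sign
    have he : e ∈ signedUnits B := by
      refine mem_insert_of_mem (mem_image.mpr ⟨(j₀, (k j₀).sign), mem_product.mpr ⟨hj₀B, ?_⟩, rfl⟩)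
      rcases hj₀.lt_or_gt with h | h
      · simp [Int.sign_eq_neg_one_of_neg h]
      · simp [Int.sign_eq_one_of_pos h]
    have hsub_ne : ∀ j, j ≠ j₀ → (k - e) j = k j := fun j hj ↦ by simp [e, hj]
    have hsupp : ∀ j, (k - e) j ≠ 0 → j ∈ B := fun j hj ↦ by
      by_cases hjj : j = j₀
      · exact hjj ▸ hj₀B
      · exact hk j (by rwa [hsub_ne j hjj] at hj)
    have hsum : ∑ j ∈ B, ((k - e) j).natAbs + 1 = ∑ j ∈ B, (k j).natAbs := by
      rw [← add_sum_erase B _ hj₀B, ← add_sum_erase B (fun j ↦ (k j).natAbs) hj₀B,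
        sum_congr rfl fun j hj ↦ by rw [hsub_ne j (ne_of_mem_erase hj)]]
      have : (k - e) j₀ = k j₀ - (k j₀).sign := by simp [e]
      rw [this, ← natAbs_sub_sign_add_one hj₀]
      ring
    simpa using add_mem_add (ih hsupp (by omega)) he

end SignedUnits

theorem one_add_enorm_pos {d : ℕ} (j : Zd d) : 0 < 1 + enorm j :=
  add_pos_of_pos_of_nonneg one_pos (Real.sqrt_nonneg _)

theorem abs_coord_le_enorm {d : ℕ} (j : Zd d) (i : Fin d) : |(j i : ℝ)| ≤ enorm j := by
  rw [enorm, ← Real.sqrt_sq_eq_abs]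
  exact Real.sqrt_le_sqrt (Finset.single_le_sum (fun i _ ↦ sq_nonneg (j i : ℝ)) (Finset.mem_univ i))

noncomputable def box (d N : ℕ) : Finset (Zd d) := Fintype.piFinset fun _ ↦ Finset.Icc (-(N : ℤ)) N

theorem card_box (d N : ℕ) : (box d N).card = (2 * N + 1) ^ d := by
  rw [box, Fintype.card_piFinset, Finset.prod_const, Finset.card_univ, Fintype.card_fin,
    Int.card_Icc]
  congr
  omega

theorem mem_box_of_enorm_le {d N : ℕ} {j : Zd d} (hj : enorm j ≤ N) : j ∈ box d N := by
  refine Fintype.mem_piFinset.mpr fun i ↦ Finset.mem_Icc.mpr (abs_le.mp ?_)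
  exact_mod_cast (abs_coord_le_enorm j i).trans hj

theorem measure_abs_sum_mul_nlsFreq_lt_le {d n : ℕ} {μ : Measure (Zd d → ℝ)}
    (hμ : IsCylinderUniform d μ) (g : Fin d → Fin d → ℝ) {B : Finset (Zd d)} {k : Zd d → ℤ}
    {j₀ : Zd d} (hj₀B : j₀ ∈ B) (hj₀ : k j₀ ≠ 0) {R ε : ℝ} (hR : enorm j₀ ≤ R) (hε : 0 ≤ ε) :
    μ {a | |∑ j ∈ B, (k j : ℝ) * nlsFreq d n g a j| < ε} ≤
      ENNReal.ofReal (2 * ε * (1 + R) ^ n) := by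
  set w : Zd d → ℝ := fun j ↦ (1 + enorm j) ^ (-(n : ℝ))
  have hw : ∀ j, 0 < w j := fun j ↦ Real.rpow_pos_of_pos (one_add_enorm_pos j) _
  have hexpand : ∀ a, ∑ j ∈ B, (k j : ℝ) * nlsFreq d n g a j =
      ∑ j ∈ B, (k j : ℝ) * qform d g j + ∑ j ∈ B, (k j * w j) * a j := fun a ↦ by
    rw [← Finset.sum_add_distrib]
    exact Finset.sum_congr rfl fun j _ ↦ by simp only [nlsFreq, w]; ring
  simp only [hexpand, eq_infinitePi_of_isCylinderUniform hμ]
  have hb : (k j₀ : ℝ) * w j₀ ≠ 0 := mul_ne_zero (Int.cast_ne_zero.mpr hj₀) (hw j₀).ne'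
  refine (infinitePi_abs_add_sum_mul_lt_le (ν := fun _ ↦ unitUniform) Measure.restrict_le_self
    hj₀B hb _ ε).trans (ENNReal.ofReal_le_ofReal ?_)
  have hk : (1 : ℝ) ≤ |(k j₀ : ℝ)| := by exact_mod_cast Int.one_le_abs hj₀
  have hwinv : (w j₀)⁻¹ ≤ (1 + R) ^ n := by
    simp only [w]
    rw [Real.rpow_neg (one_add_enorm_pos j₀).le, inv_inv, Real.rpow_natCast]
    exact pow_le_pow_left₀ (one_add_enorm_pos j₀).le (by linarith) n
  calc 2 * ε / |(k j₀ : ℝ) * w j₀| ≤ 2 * ε / w j₀ := by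
        rw [abs_mul, abs_of_pos (hw j₀)]
        exact div_le_div_of_nonneg_left (by positivity) (hw j₀)
          (le_mul_of_one_le_left (hw j₀).le hk)
    _ ≤ 2 * ε * (1 + R) ^ n := by
        rw [div_eq_mul_inv]
        exact mul_le_mul_of_nonneg_left hwinv (by positivity)

def resonanceExponent (d n r : ℕ) : ℕ := (d + 1) * r + n + 2

theorem count_mul_slab_bound_le (d n r : ℕ) {x γ : ℝ} (hx : 1 ≤ x) (hγ : 0 ≤ γ) :
    (2 * (2 * x + 1) ^ d + 1) ^ r * (2 * (γ / x ^ resonanceExponent d n r) * (1 + x) ^ n) ≤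
      γ * (2 * 3 ^ ((d + 1) * r + n) * (x ^ 2)⁻¹) := by
  have hx0 : 0 < x := by linarith
  have hbox : 2 * (2 * x + 1) ^ d + 1 ≤ (3 * x) ^ (d + 1) := by
    have h1 : (2 * x + 1) ^ d ≤ (3 * x) ^ d := pow_le_pow_left₀ (by linarith) (by linarith) d
    have h2 : 1 ≤ (3 * x) ^ d := one_le_pow₀ (by linarith)
    rw [pow_succ]
    nlinarith
  calc (2 * (2 * x + 1) ^ d + 1) ^ r * (2 * (γ / x ^ resonanceExponent d n r) * (1 + x) ^ n)
      ≤ ((3 * x) ^ (d + 1)) ^ r * (2 * (γ / x ^ resonanceExponent d n r) * (3 * x) ^ n) := by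
        gcongr
        linarith
    _ = γ * (2 * 3 ^ ((d + 1) * r + n) * (x ^ 2)⁻¹) := by
        rw [resonanceExponent]
        field_simp
        ring

def resonantSet (d n r : ℕ) (g : Fin d → Fin d → ℝ) (N : ℕ) (ε : ℝ) : Set (Zd d → ℝ) :=
  {a | ∃ k : Zd d → ℤ, (∀ j, k j ≠ 0 → enorm j ≤ N) ∧ 0 < ∑ᶠ j, (k j).natAbs ∧
    ∑ᶠ j, (k j).natAbs ≤ r ∧ |∑ᶠ j, (k j : ℝ) * nlsFreq d n g a j| < ε}

theorem resonantSet_eq_empty {d n r : ℕ} (g : Fin d → Fin d → ℝ) (N : ℕ) {ε : ℝ} (hε : ε ≤ 0) :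
    resonantSet d n r g N ε = ∅ :=
  Set.eq_empty_of_forall_notMem fun _ ⟨_, _, _, _, h⟩ ↦ (abs_nonneg _).not_gt (h.trans_le hε)

open Finset Pointwise in
theorem measure_resonantSet_le {d n r : ℕ} {μ : Measure (Zd d → ℝ)}
    (hμ : IsCylinderUniform d μ) (g : Fin d → Fin d → ℝ) (N : ℕ) {ε : ℝ} (hε : 0 ≤ ε) :
    μ (resonantSet d n r g N ε) ≤
      ENNReal.ofReal ((2 * (2 * N + 1) ^ d + 1) ^ r * (2 * ε * (1 + N) ^ n)) := by
  classical
  set K := r • signedUnits (box d N)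
  set slab : (Zd d → ℤ) → Set (Zd d → ℝ) := fun k ↦
    {a | (∃ j₀, k j₀ ≠ 0 ∧ enorm j₀ ≤ N) ∧ |∑ j ∈ box d N, (k j : ℝ) * nlsFreq d n g a j| < ε}
  have hcover : resonantSet d n r g N ε ⊆ ⋃ k ∈ K, slab k := by
    rintro a ⟨k, hk, hpos, hr, hlt⟩
    have hbox : ∀ j, k j ≠ 0 → j ∈ box d N := fun j hj ↦ mem_box_of_enorm_le (hk j hj)
    rw [finsum_eq_sum_of_support_subset _ fun j hj ↦ hbox j (by simpa using hj)] at hpos hr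
    rw [finsum_eq_sum_of_support_subset _ fun j hj ↦ hbox j (by simp_all)] at hlt
    obtain ⟨j₀, -, hj₀⟩ := exists_ne_zero_of_sum_ne_zero hpos.ne'
    have hj₀' : k j₀ ≠ 0 := Int.natAbs_ne_zero.mp hj₀
    exact Set.mem_biUnion (mem_nsmul_signedUnits r hbox hr) ⟨⟨j₀, hj₀', hk j₀ hj₀'⟩, hlt⟩
  have hslab : ∀ k, μ (slab k) ≤ ENNReal.ofReal (2 * ε * (1 + N) ^ n) := by
    intro k
    by_cases h : ∃ j₀, k j₀ ≠ 0 ∧ enorm j₀ ≤ N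
    · obtain ⟨j₀, hj₀, hN⟩ := h
      exact (measure_mono fun a ha ↦ ha.2).trans
        (measure_abs_sum_mul_nlsFreq_lt_le hμ g (mem_box_of_enorm_le hN) hj₀ hN hε)
    · simp [slab, h]
  have hcard : (#K : ℝ) ≤ (2 * (2 * N + 1) ^ d + 1) ^ r := by
    have := card_nsmul_le.trans (Nat.pow_le_pow_left (card_signedUnits_le (box d N)) r)
    rw [card_box] at this
    exact_mod_cast this
  calc μ (resonantSet d n r g N ε) ≤ ∑ k ∈ K, μ (slab k) :=
        (measure_mono hcover).trans (measure_biUnion_finset_le K slab)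
    _ ≤ ∑ _k ∈ K, ENNReal.ofReal (2 * ε * (1 + N) ^ n) := sum_le_sum fun k _ ↦ hslab k
    _ = ENNReal.ofReal (#K * (2 * ε * (1 + N) ^ n)) := by
        rw [sum_const, nsmul_eq_mul, ENNReal.ofReal_mul (Nat.cast_nonneg _), ENNReal.ofReal_natCast]
    _ ≤ _ := ENNReal.ofReal_le_ofReal (mul_le_mul_of_nonneg_right hcard (by positivity))

theorem measure_iUnion_resonantSet_le {d n r : ℕ} {μ : Measure (Zd d → ℝ)}
    (hμ : IsCylinderUniform d μ) (g : Fin d → Fin d → ℝ) {γ : ℝ} (hγ : 0 ≤ γ) :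
    μ (⋃ N : ℕ, resonantSet d n r g N (γ / (N : ℝ) ^ resonanceExponent d n r)) ≤
      ENNReal.ofReal (γ * ∑' N : ℕ, 2 * 3 ^ ((d + 1) * r + n) * ((N : ℝ) ^ 2)⁻¹) := by
  have hsum : Summable fun N : ℕ ↦ 2 * 3 ^ ((d + 1) * r + n) * ((N : ℝ) ^ 2)⁻¹ :=
    (Real.summable_nat_pow_inv.mpr one_lt_two).mul_left _
  calc _ ≤ ∑' N : ℕ, μ (resonantSet d n r g N (γ / (N : ℝ) ^ resonanceExponent d n r)) :=
        measure_iUnion_le _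
    _ ≤ ∑' N : ℕ, ENNReal.ofReal (γ * (2 * 3 ^ ((d + 1) * r + n) * ((N : ℝ) ^ 2)⁻¹)) := by
        refine ENNReal.tsum_le_tsum fun N ↦ ?_
        rcases N.eq_zero_or_pos with rfl | hN
        · rw [Nat.cast_zero, zero_pow (by simp [resonanceExponent]), div_zero,
            resonantSet_eq_empty g 0 le_rfl, measure_empty]
          exact zero_le
        refine (measure_resonantSet_le hμ g N (by positivity)).trans (ENNReal.ofReal_le_ofReal ?_)
        exact count_mul_slab_bound_le d n r (by exact_mod_cast hN) hγ
    _ = _ := by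
        rw [← ENNReal.ofReal_tsum_of_nonneg (fun N ↦ by positivity) (hsum.mul_left γ),
          tsum_mul_left]

theorem measure_eq_zero_of_forall_pos_le_mul {α : Type*} [MeasurableSpace α] {μ : Measure α}
    {s : Set α} {C : ℝ} (h : ∀ γ > 0, μ s ≤ ENNReal.ofReal (γ * C)) : μ s = 0 := by
  have hlim : Filter.Tendsto (fun γ : ℝ ↦ γ * C) (nhdsWithin 0 (Set.Ioi 0)) (nhds 0) :=
    ((continuous_mul_const C).tendsto' 0 0 (zero_mul C)).mono_left nhdsWithin_le_nhds
  replace hlim := ENNReal.ofReal_zero ▸ ENNReal.tendsto_ofReal hlim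
  exact nonpos_iff_eq_zero.mp (ge_of_tendsto hlim (eventually_nhdsWithin_of_forall h))

theorem stmt_12_general (d : ℕ) (n r : ℕ)
    (g : Fin d → Fin d → ℝ)
    (μ : Measure (Zd d → ℝ)) (hμ : IsCylinderUniform d μ) :
    ∃ τ : ℝ, 0 < τ ∧ ∃ Vres : Set (Zd d → ℝ), μ Vres = 0 ∧
      ∀ a : Zd d → ℝ, (∀ j, a j ∈ Set.Icc (-(1 : ℝ) / 2) (1 / 2)) → a ∉ Vres →
        ∃ γ : ℝ, 0 < γ ∧ ∀ N : ℕ, 1 ≤ N → ∀ k : Zd d → ℤ,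
          (∀ j, k j ≠ 0 → enorm j ≤ N) → (Function.support k).Finite →
          0 < ∑ᶠ j, (k j).natAbs → ∑ᶠ j, (k j).natAbs ≤ r →
          γ / (N : ℝ) ^ τ ≤ |∑ᶠ j : Zd d, (k j : ℝ) * nlsFreq d n g a j| := by
  set τ := resonanceExponent d n r
  set bad : ℝ → Set (Zd d → ℝ) := fun γ ↦ ⋃ N : ℕ, resonantSet d n r g N (γ / (N : ℝ) ^ τ)
  refine ⟨τ, Nat.cast_pos.mpr (Nat.succ_pos _), ⋂ γ > 0, bad γ, ?_, fun a _ ha ↦ ?_⟩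
  · exact measure_eq_zero_of_forall_pos_le_mul fun γ hγ ↦
      (measure_mono (Set.biInter_subset_of_mem hγ)).trans (measure_iUnion_resonantSet_le hμ g hγ.le)
  obtain ⟨γ, hγ, haγ⟩ : ∃ γ > 0, a ∉ bad γ := by simpa using ha
  refine ⟨γ, hγ, fun N _ k hk _ hpos hr ↦ not_lt.mp fun hlt ↦ haγ ?_⟩
  rw [Real.rpow_natCast] at hlt
  exact Set.mem_iUnion.mpr ⟨N, k, hk, hpos, hr, hlt⟩

/-- Lemma `tutto.res`: full measure non-resonance for NLS.
There are `τ > 0` and a set `𝒱^{res}` of zero product-uniform measure such that for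
every `a ∈ [−1/2,1/2]^{ℤ^d} ∖ 𝒱^{res}` there is `γ > 0` with
`|Σ k_j ω_j(a)| ≥ γ/N^τ` for every `N ≥ 1` and every `k : ℤ^d_N → ℤ` with
`0 < Σ|k_j| ≤ r`. -/
theorem stmt_12 (d : ℕ) (hd : 1 ≤ d) (n r : ℕ)
    (g : Fin d → Fin d → ℝ) (hsym : ∀ i k, g i k = g k i)
    (hpos : ∀ x : Fin d → ℝ, x ≠ 0 → 0 < ∑ i, ∑ k, g i k * x i * x k)
    (μ : Measure (Zd d → ℝ)) (hμ : IsCylinderUniform d μ) :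
    ∃ τ : ℝ, 0 < τ ∧ ∃ Vres : Set (Zd d → ℝ), μ Vres = 0 ∧
      ∀ a : Zd d → ℝ, (∀ j, a j ∈ Set.Icc (-(1 : ℝ) / 2) (1 / 2)) → a ∉ Vres →
        ∃ γ : ℝ, 0 < γ ∧ ∀ N : ℕ, 1 ≤ N → ∀ k : Zd d → ℤ,
          (∀ j, k j ≠ 0 → enorm j ≤ N) → (Function.support k).Finite →
          0 < ∑ᶠ j, (k j).natAbs → ∑ᶠ j, (k j).natAbs ≤ r →
          γ / (N : ℝ) ^ τ ≤ |∑ᶠ j : Zd d, (k j : ℝ) * nlsFreq d n g a j| :=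
  stmt_12_general d n r g μ hμ

end AG
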